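/- (Corollary to Lemma 1) Let a, b ∈ ℤ and l ∈ ℕ. Then for every root of unity ζ ≠ 1 of order p with 2 ≤ p ≤ l, the Laurent polynomial φ(q^{aμ}(q^{μ-b-1}-1)(q^{μ-b-2}-1)⋯(q^{μ-b-l}-1)) ∈ ℤ[q, q^{-1}] vanishes at q = ζ. -/

import Mathlib

open Finset LaurentPolynomial

/-- The value of `φ` at `q = ζ` on the monomial `q^{mμ}`:
`φ(q^{mμ})|_{q=ζ} = (ζ^{(m+1)²} + ζ^{(m-1)²} - 2ζ^{m²})/(2ζ - 2)`. -/
noncomputable def phiMonomial (ζ : ℂ) (m : ℤ) : ℂ :=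
  (ζ ^ ((m + 1) ^ 2) + ζ ^ ((m - 1) ^ 2) - 2 * ζ ^ (m ^ 2)) / (2 * ζ - 2)

/-- The linear extension of `φ|_{q=ζ}` to Laurent polynomials in `t = q^μ`
(with complex coefficients). -/
noncomputable def phi (ζ : ℂ) (f : LaurentPolynomial ℂ) : ℂ :=
  f.coeff.sum fun m c => c * phiMonomial ζ m

lemma phi_eq_lift (ζ : ℂ) (f : LaurentPolynomial ℂ) :
    phi ζ f = (Finsupp.lift ℂ ℂ ℤ (phiMonomial ζ) ∘ₗ
      (AddMonoidAlgebra.coeffLinearEquiv ℂ).toLinearMap) f := rfl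

lemma phi_C_mul_T (ζ : ℂ) (c : ℂ) (m : ℤ) :
    phi ζ (C c * T m) = c * phiMonomial ζ m := by
  rw [← single_eq_C_mul_T, phi, AddMonoidAlgebra.coeff_single]
  apply Finsupp.sum_single_index; simp

lemma zpow_sq_period {ζ : ℂ} {p : ℕ} (hζ0 : ζ ≠ 0) (hζp : ζ ^ p = 1) (x : ℤ) :
    ζ ^ (((p : ℤ) + x) ^ 2) = ζ ^ (x ^ 2) := by
  have h : ((p : ℤ) + x) ^ 2 = x ^ 2 + (p : ℤ) * ((p : ℤ) + 2 * x) := by ring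
  rw [h, zpow_add₀ hζ0, zpow_mul, zpow_natCast, hζp, one_zpow, mul_one]

lemma phiMonomial_period {ζ : ℂ} {p : ℕ} (hζ0 : ζ ≠ 0) (hζp : ζ ^ p = 1) (m : ℤ) :
    phiMonomial ζ ((p : ℤ) + m) = phiMonomial ζ m := by
  unfold phiMonomial
  rw [show ((p : ℤ) + m + 1) = ((p : ℤ) + (m + 1)) by ring,
    show ((p : ℤ) + m - 1) = ((p : ℤ) + (m - 1)) by ring,
    zpow_sq_period hζ0 hζp (m + 1), zpow_sq_period hζ0 hζp (m - 1),
    zpow_sq_period hζ0 hζp m]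

/-- `φ|_{q=ζ}` kills every multiple of `T p - 1` when `ζ^p = 1`. -/
lemma phi_kill {ζ : ℂ} {p : ℕ} (hζ0 : ζ ≠ 0) (hζp : ζ ^ p = 1)
    (g : LaurentPolynomial ℂ) : phi ζ ((T (p : ℤ) - 1) * g) = 0 := by
  induction g using LaurentPolynomial.induction_on' with
  | add f g hf hg =>
    rw [mul_add, phi_eq_lift, map_add, ← phi_eq_lift, ← phi_eq_lift, hf, hg, add_zero]
  | C_mul_T n a =>
    have h : (T (p : ℤ) - 1) * (C a * T n) = C a * T ((p : ℤ) + n) - C a * T n := by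
      rw [sub_mul, one_mul, T_mul, mul_T_assoc, add_comm n (p : ℤ)]
    rw [h, phi_eq_lift, map_sub, ← phi_eq_lift, ← phi_eq_lift, phi_C_mul_T, phi_C_mul_T,
      phiMonomial_period hζ0 hζp, sub_self]

/-- The product of `p` consecutive factors is divisible by `T p - 1`. -/
lemma T_pow_sub_one_dvd_block {ζ : ℂ} {p : ℕ} (hζ : IsPrimitiveRoot ζ p) (hp : 0 < p)
    (e : ℤ) : (T (p : ℤ) - 1 : LaurentPolynomial ℂ) ∣
      ∏ j ∈ range p, (C (ζ ^ (e - (j : ℤ))) * T 1 - 1) := by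
  have hζ0 : ζ ≠ 0 := hζ.ne_zero hp.ne'
  have key : ∏ j ∈ range p, ((C (ζ ^ e) * T 1 : LaurentPolynomial ℂ) - C (ζ ^ j))
      = T (p : ℤ) - 1 := by
    have hpoly := X_pow_sub_C_eq_prod hζ hp (one_pow p)
    have h2 := congrArg (Polynomial.aeval (C (ζ ^ e) * T 1 : LaurentPolynomial ℂ)) hpoly
    simp only [map_sub, map_pow, map_prod, Polynomial.aeval_X, Polynomial.aeval_C,
      ← LaurentPolynomial.C_eq_algebraMap, mul_one] at h2
    simp only [← map_pow] at h2
    rw [← h2, mul_pow, ← map_pow, T_pow, mul_one, ← zpow_natCast (ζ ^ e),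
      ← zpow_mul, mul_comm e (p : ℤ), zpow_mul, zpow_natCast, hζ.pow_eq_one, one_zpow,
      map_one, one_mul]
  have hfac : ∀ j ∈ range p, ((C (ζ ^ e) * T 1 : LaurentPolynomial ℂ) - C (ζ ^ j))
      = C (ζ ^ j) * (C (ζ ^ (e - (j : ℤ))) * T 1 - 1) := by
    intro j _
    rw [mul_sub, mul_one, ← mul_assoc, ← map_mul, ← zpow_natCast ζ j, ← zpow_add₀ hζ0,
      show ((j : ℤ) + (e - (j : ℤ))) = e by ring]
  rw [Finset.prod_congr rfl hfac, prod_mul_distrib, ← map_prod] at key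
  set w : ℂ := ∏ j ∈ range p, ζ ^ j with hw
  set P : LaurentPolynomial ℂ := ∏ j ∈ range p, (C (ζ ^ (e - (j : ℤ))) * T 1 - 1) with hP
  have hw0 : w ≠ 0 := Finset.prod_ne_zero_iff.2 fun j _ => pow_ne_zero j hζ0
  have hPfinal : P = (T (p : ℤ) - 1) * C w⁻¹ := by
    calc P = C (w⁻¹ * w) * P := by rw [inv_mul_cancel₀ hw0, map_one, one_mul]
    _ = C w⁻¹ * (C w * P) := by rw [map_mul, mul_assoc]
    _ = (T (p : ℤ) - 1) * C w⁻¹ := by rw [key, mul_comm]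
  exact Dvd.intro _ hPfinal.symm

/-- Corollary to Lemma 1 of Lawrence–Ron: for `a, b ∈ ℤ`, `l ∈ ℕ`, the Laurent
polynomial `φ(q^{aμ}(q^{μ-b-1}-1)⋯(q^{μ-b-l}-1))` vanishes at `q = ζ` for every
root of unity `ζ` of order `p` with `2 ≤ p ≤ l`; consequently it is divisible by
`⟨l⟩! = ∏_{p≤l} Φ_p(q)`. -/
theorem corollary_vanishes_at_roots (a b : ℤ) (l : ℕ) (p : ℕ)
    (hp : 2 ≤ p) (hpl : p ≤ l) (ζ : ℂ) (hζ : IsPrimitiveRoot ζ p) :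
    phi ζ (T a * ∏ j ∈ range l, (C (ζ ^ (-b - (j + 1) : ℤ)) * T 1 - 1)) = 0 := by
  have hp0 : 0 < p := by omega
  have hζ0 : ζ ≠ 0 := hζ.ne_zero hp0.ne'
  have hdvd : (T (p : ℤ) - 1 : LaurentPolynomial ℂ) ∣
      ∏ j ∈ range l, (C (ζ ^ (-b - (j + 1) : ℤ)) * T 1 - 1) := by
    rw [show l = p + (l - p) by omega, prod_range_add]
    refine Dvd.dvd.mul_right ?_ _
    have h := T_pow_sub_one_dvd_block hζ hp0 (-b - 1)
    rwa [Finset.prod_congr rfl fun j _ => by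
      rw [show (-b - 1 - (j : ℤ)) = (-b - ((j : ℤ) + 1)) by ring]] at h
  obtain ⟨g, hg⟩ := hdvd
  rw [hg, mul_left_comm]
  exact phi_kill hζ0 hζ.pow_eq_one _
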